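/- Let n ≥ 1, λ ≠ 0 and θ ∈ ℝ^{n−1}. Consider the n × (n+1) real matrix Π_{λ,θ} whose first row is ( (1/2)(λ + 1/λ) − |θ|²/(4λ), θ/(λ√2), −(1/2)(λ − 1/λ) + |θ|²/(4λ) ) and whose remaining (n−1) rows form the block ( −θ/√2, I_{n−1}, θ/√2 ), where I_{n−1} is the (n−1)×(n−1) identity matrix. Then Π_{λ,θ} has rank n, and the kernel of Π_{λ,θ} is the one-dimensional span of the unit vector G(θ,λ) = ( 1/2 − |θ|²/4 − λ²/2, θ/√2, −1/2 − |θ|²/4 − λ²/2 ) / √( 1/2 + |θ|²/2 + 2(|θ|²/4 + λ²/2)² ) ∈ ℝ^{n+1}. -/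

import Mathlib

/-!
The last `n - 1` rows of `Π_{λ,θ}` say exactly that `b = ((a - c)/√2) θ`. Substituting this
into the first row turns it into `(a (λ² + 1 + |θ|²/2) - c (λ² - 1 + |θ|²/2)) / (2λ)`, a single
nontrivial linear equation in `(a, c)`, whose solution line is spanned by the unnormalised
`G(θ, λ)`. The kernel is therefore a line, and full rank follows by rank–nullity.
-/

open MeasureTheory Real Metric Set
open scoped RealInnerProductSpace ENNReal NNReal

noncomputable section

/-- The linear action of the `n × (n+1)` matrix `Π_{λ,θ}`, on `ℝ^{n+1}` written as
`ℝ × ℝ^{n-1} × ℝ`, with values in `ℝ^n` written as `ℝ × ℝ^{n-1}`. -/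
def PiFun {m : ℕ} (l : ℝ) (θ : EuclideanSpace ℝ (Fin m))
    (p : ℝ × EuclideanSpace ℝ (Fin m) × ℝ) : ℝ × EuclideanSpace ℝ (Fin m) :=
  (((l + l⁻¹) / 2 - ‖θ‖ ^ 2 / (4 * l)) * p.1 + ⟪θ, p.2.1⟫ / (l * Real.sqrt 2) +
      (-((l - l⁻¹) / 2) + ‖θ‖ ^ 2 / (4 * l)) * p.2.2,
    p.2.1 + ((p.2.2 - p.1) / Real.sqrt 2) • θ)

/-- The unit vector `G(θ, λ)` spanning the kernel of `Π_{λ,θ}`. -/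
def kerG {m : ℕ} (l : ℝ) (θ : EuclideanSpace ℝ (Fin m)) :
    ℝ × EuclideanSpace ℝ (Fin m) × ℝ :=
  (Real.sqrt (1 / 2 + ‖θ‖ ^ 2 / 2 + 2 * (‖θ‖ ^ 2 / 4 + l ^ 2 / 2) ^ 2))⁻¹ •
    (1 / 2 - ‖θ‖ ^ 2 / 4 - l ^ 2 / 2,
      (Real.sqrt 2)⁻¹ • θ,
      -(1 / 2) - ‖θ‖ ^ 2 / 4 - l ^ 2 / 2)

theorem LinearMap.surjective_of_finrank_ker_add_finrank_eq {K V W : Type*} [Field K]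
    [AddCommGroup V] [Module K V] [AddCommGroup W] [Module K W]
    [FiniteDimensional K V] [FiniteDimensional K W] (f : V →ₗ[K] W)
    (h : Module.finrank K (LinearMap.ker f) + Module.finrank K W = Module.finrank K V) :
    Function.Surjective f := by
  rw [← LinearMap.range_eq_top]
  apply Submodule.eq_top_of_finrank_eq
  have := f.finrank_range_add_finrank_ker
  omega

section

variable {m : ℕ} (l : ℝ) (θ : EuclideanSpace ℝ (Fin m))

def kerVec : ℝ × EuclideanSpace ℝ (Fin m) × ℝ :=
  (1 / 2 - ‖θ‖ ^ 2 / 4 - l ^ 2 / 2, (√2)⁻¹ • θ, -(1 / 2) - ‖θ‖ ^ 2 / 4 - l ^ 2 / 2)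

theorem kerVec_normSq :
    (kerVec l θ).1 ^ 2 + ‖(kerVec l θ).2.1‖ ^ 2 + (kerVec l θ).2.2 ^ 2 =
      1 / 2 + ‖θ‖ ^ 2 / 2 + 2 * (‖θ‖ ^ 2 / 4 + l ^ 2 / 2) ^ 2 := by
  rw [kerVec, norm_smul, mul_pow, norm_inv, Real.norm_of_nonneg (Real.sqrt_nonneg _), inv_pow,
    Real.sq_sqrt zero_le_two]
  ring

theorem kerG_eq_smul_kerVec :
    kerG l θ = (√(1 / 2 + ‖θ‖ ^ 2 / 2 + 2 * (‖θ‖ ^ 2 / 4 + l ^ 2 / 2) ^ 2))⁻¹ • kerVec l θ :=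
  rfl

theorem kerG_normSq :
    (kerG l θ).1 ^ 2 + ‖(kerG l θ).2.1‖ ^ 2 + (kerG l θ).2.2 ^ 2 = 1 := by
  have hpos : 0 < 1 / 2 + ‖θ‖ ^ 2 / 2 + 2 * (‖θ‖ ^ 2 / 4 + l ^ 2 / 2) ^ 2 := by positivity
  rw [kerG_eq_smul_kerVec]
  simp only [Prod.smul_fst, Prod.smul_snd, smul_eq_mul, norm_smul, mul_pow, norm_inv,
    Real.norm_of_nonneg (Real.sqrt_nonneg _)]
  rw [← mul_add, ← mul_add, kerVec_normSq, inv_pow, Real.sq_sqrt hpos.le, inv_mul_cancel₀ hpos.ne']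

theorem span_kerG_eq_span_kerVec : ℝ ∙ kerG l θ = ℝ ∙ kerVec l θ := by
  rw [kerG_eq_smul_kerVec, Submodule.span_singleton_smul_eq]
  exact (inv_pos.2 (Real.sqrt_pos.2 (by positivity))).ne'.isUnit

/-- Since `α - β = 2` for the coefficients of `a α = c β`, that line is spanned by
`(-β/2, -α/2)` and the multiple of `kerVec` through `(a, b, c)` is `a - c`. -/
theorem mem_span_kerVec_iff (p : ℝ × EuclideanSpace ℝ (Fin m) × ℝ) :
    p ∈ ℝ ∙ kerVec l θ ↔ p.2.1 = ((p.1 - p.2.2) / √2) • θ ∧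
      p.1 * (l ^ 2 + 1 + ‖θ‖ ^ 2 / 2) = p.2.2 * (l ^ 2 - 1 + ‖θ‖ ^ 2 / 2) := by
  rw [Submodule.mem_span_singleton]
  constructor
  · rintro ⟨c, rfl⟩
    simp only [kerVec, Prod.smul_fst, Prod.smul_snd, smul_eq_mul, smul_smul]
    exact ⟨by congr 1; ring, by ring⟩
  · rintro ⟨hv, hac⟩
    refine ⟨p.1 - p.2.2, Prod.ext ?_ (Prod.ext ?_ ?_)⟩
    · simp only [kerVec, Prod.smul_fst, smul_eq_mul]
      linear_combination -hac / 2
    · simp only [kerVec, Prod.smul_fst, Prod.smul_snd, smul_smul, hv, div_eq_mul_inv]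
    · simp only [kerVec, Prod.smul_snd, smul_eq_mul]
      linear_combination -hac / 2

namespace PiFun

theorem isLinearMap : IsLinearMap ℝ (PiFun l θ) where
  map_add := by
    rintro ⟨a, v, b⟩ ⟨a', v', b'⟩
    simp only [PiFun, Prod.mk_add_mk, Prod.mk.injEq, inner_add_right]
    exact ⟨by ring, by module⟩
  map_smul := by
    rintro c ⟨a, v, b⟩
    simp only [PiFun, Prod.smul_mk, smul_eq_mul, inner_smul_right, Prod.mk.injEq]
    exact ⟨by ring, by module⟩

theorem snd_eq_zero_iff (p : ℝ × EuclideanSpace ℝ (Fin m) × ℝ) :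
    (PiFun l θ p).2 = 0 ↔ p.2.1 = ((p.1 - p.2.2) / √2) • θ := by
  rw [PiFun, add_eq_zero_iff_eq_neg, ← neg_smul, ← neg_div, neg_sub]

theorem fst_of_snd_eq_zero {l : ℝ} (hl : l ≠ 0) {p : ℝ × EuclideanSpace ℝ (Fin m) × ℝ}
    (h : (PiFun l θ p).2 = 0) :
    (PiFun l θ p).1 =
      (p.1 * (l ^ 2 + 1 + ‖θ‖ ^ 2 / 2) - p.2.2 * (l ^ 2 - 1 + ‖θ‖ ^ 2 / 2)) / (2 * l) := by
  rw [PiFun, (snd_eq_zero_iff l θ p).1 h, inner_smul_right, real_inner_self_eq_norm_sq]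
  field_simp
  rw [Real.sq_sqrt zero_le_two]
  ring

theorem eq_zero_iff {l : ℝ} (hl : l ≠ 0) (p : ℝ × EuclideanSpace ℝ (Fin m) × ℝ) :
    PiFun l θ p = 0 ↔ p.2.1 = ((p.1 - p.2.2) / √2) • θ ∧
      p.1 * (l ^ 2 + 1 + ‖θ‖ ^ 2 / 2) = p.2.2 * (l ^ 2 - 1 + ‖θ‖ ^ 2 / 2) := by
  rw [Prod.ext_iff, Prod.fst_zero, Prod.snd_zero, and_comm, ← snd_eq_zero_iff]
  refine and_congr_right fun h => ?_
  rw [fst_of_snd_eq_zero θ hl h, div_eq_zero_iff, sub_eq_zero]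
  simp [hl]

theorem setOf_eq_zero {l : ℝ} (hl : l ≠ 0) :
    {p | PiFun l θ p = 0} = ((ℝ ∙ kerG l θ : Submodule ℝ _) : Set _) := by
  ext p
  rw [Set.mem_ofPred_eq, SetLike.mem_coe, span_kerG_eq_span_kerVec, mem_span_kerVec_iff,
    eq_zero_iff θ hl]

theorem surjective {l : ℝ} (hl : l ≠ 0) : Function.Surjective (PiFun l θ) := by
  have hG0 : kerG l θ ≠ 0 := fun h => by simpa [h] using kerG_normSq l θ
  have hker : LinearMap.ker (isLinearMap l θ).mk' = ℝ ∙ kerG l θ :=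
    SetLike.coe_injective (setOf_eq_zero θ hl)
  refine LinearMap.surjective_of_finrank_ker_add_finrank_eq (isLinearMap l θ).mk' ?_
  rw [hker, finrank_span_singleton hG0]
  simp only [Module.finrank_prod, finrank_euclideanSpace_fin, Module.finrank_self]
  ring

end PiFun

end

theorem PiFun_rank_and_kernel_general (n : ℕ) (l : ℝ) (hl : l ≠ 0)
    (θ : EuclideanSpace ℝ (Fin (n - 1))) :
    IsLinearMap ℝ (PiFun l θ) ∧
    Function.Surjective (PiFun l θ) ∧
    {p : ℝ × EuclideanSpace ℝ (Fin (n - 1)) × ℝ | PiFun l θ p = 0} =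
      (Submodule.span ℝ {kerG l θ} : Set (ℝ × EuclideanSpace ℝ (Fin (n - 1)) × ℝ)) ∧
    (kerG l θ).1 ^ 2 + ‖(kerG l θ).2.1‖ ^ 2 + (kerG l θ).2.2 ^ 2 = 1 :=
  ⟨PiFun.isLinearMap l θ, PiFun.surjective θ hl, PiFun.setOf_eq_zero θ hl, kerG_normSq l θ⟩

/-- For `λ ≠ 0`, the matrix `Π_{λ,θ}` is linear of full rank `n`
(i.e. surjective onto `ℝⁿ`), and its kernel is the one-dimensional span of the unit
vector `G(θ,λ)`. -/
theorem PiFun_rank_and_kernel (n : ℕ) (hn : 1 ≤ n) (l : ℝ) (hl : l ≠ 0)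
    (θ : EuclideanSpace ℝ (Fin (n - 1))) :
    IsLinearMap ℝ (PiFun l θ) ∧
    Function.Surjective (PiFun l θ) ∧
    {p : ℝ × EuclideanSpace ℝ (Fin (n - 1)) × ℝ | PiFun l θ p = 0} =
      (Submodule.span ℝ {kerG l θ} : Set (ℝ × EuclideanSpace ℝ (Fin (n - 1)) × ℝ)) ∧
    (kerG l θ).1 ^ 2 + ‖(kerG l θ).2.1‖ ^ 2 + (kerG l θ).2.2 ^ 2 = 1 :=
  PiFun_rank_and_kernel_general n l hl θ
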